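/- For all η ∈ [0,1] and α ∈ [0,1], g⁻¹(H_b(ηα)) ≥ η · g⁻¹(H_b(α)), with equality if and only if η ∈ {0,1} or α = 0. -/

import Mathlib

/-!
Write `F = g⁻¹ ∘ H_b`. Since `F 0 = F 1 = 0`, the claim reduces to `F β / β` being strictly
decreasing on `(0, 1)`. By the inverse function rule, with `u = F β`, the derivative of
`F β / β` has the sign of `β H_b'(β) - u g'(u) = log (1 - β) + log (1 + u)`, because
`β H_b'(β) = H_b(β) + log (1 - β)`, `u g'(u) = g(u) - log (1 + u)` and `g u = H_b β`.
This is negative since `g (β / (1 - β)) = H_b(β) / (1 - β) > g u` forces `u < β / (1 - β)`.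
-/

noncomputable def g (x : ℝ) : ℝ := (x + 1) * Real.log (x + 1) - x * Real.log x

noncomputable def Hb (p : ℝ) : ℝ := -(p * Real.log p) - (1 - p) * Real.log (1 - p)

open Real Set

lemma Hb_eq_binEntropy : Hb = binEntropy := by
  ext p
  simp only [Hb, binEntropy, log_inv]
  ring

lemma mul_log_one_sub_sub_log_eq (p : ℝ) :
    p * (log (1 - p) - log p) = binEntropy p + log (1 - p) := by
  simp only [binEntropy, log_inv]
  ring

lemma g_zero : g 0 = 0 := by simp [g]

lemma mul_log_add_one_sub_log_eq (x : ℝ) : x * (log (x + 1) - log x) = g x - log (x + 1) := by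
  unfold g
  ring

lemma g_div_one_sub {p : ℝ} (h0 : 0 < p) (h1 : p < 1) :
    g (p / (1 - p)) = binEntropy p / (1 - p) := by
  have hq : 1 - p ≠ 0 := by linarith
  have hsucc : p / (1 - p) + 1 = (1 - p)⁻¹ := by field_simp; ring
  rw [g, hsucc, log_inv, log_div h0.ne' hq, binEntropy, log_inv, log_inv]
  field_simp
  ring

lemma continuous_g : Continuous g :=
  (continuous_mul_log.comp (continuous_add_const 1)).sub continuous_mul_log

lemma hasDerivAt_g {x : ℝ} (hx : 0 < x) : HasDerivAt g (log (x + 1) - log x) x := by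
  have h := ((hasDerivAt_mul_log (by linarith : x + 1 ≠ 0)).comp_add_const x 1).sub
    (hasDerivAt_mul_log hx.ne')
  exact h.congr_deriv (by ring)

lemma log_add_one_sub_log_pos {x : ℝ} (hx : 0 < x) : 0 < log (x + 1) - log x :=
  sub_pos.2 (log_lt_log hx (lt_add_one x))

lemma strictMonoOn_g : StrictMonoOn g (Ici 0) := by
  refine strictMonoOn_of_hasDerivWithinAt_pos (convex_Ici 0) continuous_g.continuousOn
    (fun x hx => (hasDerivAt_g ?_).hasDerivWithinAt) (fun _ hx => log_add_one_sub_log_pos ?_)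
  all_goals rw [interior_Ici] at hx; exact hx

lemma g_nonneg {x : ℝ} (hx : 0 ≤ x) : 0 ≤ g x :=
  g_zero ▸ strictMonoOn_g.monotoneOn self_mem_Ici hx hx

section

variable {ginv : ℝ → ℝ} (hinv : ∀ x ∈ Ici (0 : ℝ), 0 ≤ ginv x ∧ g (ginv x) = x)
include hinv

lemma ginv_g {y : ℝ} (hy : 0 ≤ y) : ginv (g y) = y :=
  strictMonoOn_g.injOn (hinv _ (g_nonneg hy)).1 hy (hinv _ (g_nonneg hy)).2

lemma ginv_zero : ginv 0 = 0 := by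
  simpa [g_zero] using ginv_g hinv le_rfl

lemma ginv_lt_iff {x y : ℝ} (hx : 0 ≤ x) (hy : 0 ≤ y) : ginv x < y ↔ x < g y := by
  conv_rhs => rw [← (hinv x hx).2]
  exact (strictMonoOn_g.lt_iff_lt (hinv x hx).1 hy).symm

lemma strictMonoOn_ginv : StrictMonoOn ginv (Ici 0) := fun _ hx y hy hxy =>
  (ginv_lt_iff hinv hx (hinv y hy).1).2 ((hinv y hy).2.symm ▸ hxy)

lemma ginv_pos {x : ℝ} (hx : 0 < x) : 0 < ginv x :=
  ginv_zero hinv ▸ strictMonoOn_ginv hinv self_mem_Ici hx.le hx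

lemma continuousAt_ginv {x : ℝ} (hx : 0 < x) : ContinuousAt ginv x := by
  refine (strictMonoOn_ginv hinv).continuousAt_of_image_mem_nhds (Ici_mem_nhds hx) ?_
  refine Filter.mem_of_superset (Ici_mem_nhds (ginv_pos hinv hx)) fun y (hy : 0 ≤ y) => ?_
  exact ⟨g y, g_nonneg hy, ginv_g hinv hy⟩

lemma hasDerivAt_ginv {x : ℝ} (hx : 0 < x) :
    HasDerivAt ginv (log (ginv x + 1) - log (ginv x))⁻¹ x :=
  HasDerivAt.of_local_left_inverse (continuousAt_ginv hinv hx)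
    (hasDerivAt_g (ginv_pos hinv hx)) (log_add_one_sub_log_pos (ginv_pos hinv hx)).ne'
    (eventually_gt_nhds hx |>.mono fun _ hy => (hinv _ hy.le).2)

lemma ginv_binEntropy_lt {p : ℝ} (h0 : 0 < p) (h1 : p < 1) :
    ginv (binEntropy p) < p / (1 - p) := by
  have hq : 0 < 1 - p := by linarith
  have hH := binEntropy_pos h0 h1
  rw [ginv_lt_iff hinv hH.le (div_nonneg h0.le hq.le), g_div_one_sub h0 h1, lt_div_iff₀ hq]
  nlinarith

lemma log_one_sub_add_log_ginv_binEntropy_add_one_neg {p : ℝ} (h0 : 0 < p) (h1 : p < 1) :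
    log (1 - p) + log (ginv (binEntropy p) + 1) < 0 := by
  have hq : 0 < 1 - p := by linarith
  have hu := ginv_pos hinv (binEntropy_pos h0 h1)
  have hlt := ginv_binEntropy_lt hinv h0 h1
  rw [lt_div_iff₀ hq] at hlt
  rw [← log_mul hq.ne' (by linarith)]
  exact log_neg (by positivity) (by linarith)

lemma hasDerivAt_ginv_binEntropy_div {p : ℝ} (h0 : 0 < p) (h1 : p < 1) :
    HasDerivAt (fun q => ginv (binEntropy q) / q)
      (((log (ginv (binEntropy p) + 1) - log (ginv (binEntropy p)))⁻¹ * (log (1 - p) - log p) * p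
        - ginv (binEntropy p) * 1) / p ^ 2) p :=
  ((hasDerivAt_ginv hinv (binEntropy_pos h0 h1)).comp p
    (hasDerivAt_binEntropy h0.ne' h1.ne)).div (hasDerivAt_id p) h0.ne'

lemma strictAntiOn_ginv_binEntropy_div :
    StrictAntiOn (fun p => ginv (binEntropy p) / p) (Ioo 0 1) := by
  refine strictAntiOn_of_deriv_neg (convex_Ioo 0 1)
    (fun p hp => (hasDerivAt_ginv_binEntropy_div hinv hp.1 hp.2).continuousAt.continuousWithinAt)
    fun p hp => ?_
  rw [interior_Ioo] at hp
  obtain ⟨h0, h1⟩ := hp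
  rw [(hasDerivAt_ginv_binEntropy_div hinv h0 h1).deriv]
  set u := ginv (binEntropy p)
  have hH := binEntropy_pos h0 h1
  have hc := log_add_one_sub_log_pos (ginv_pos hinv hH)
  have hslope : (log (1 - p) - log p) * p < u * (log (u + 1) - log u) := by
    rw [mul_comm, mul_log_one_sub_sub_log_eq, mul_log_add_one_sub_log_eq, (hinv _ hH.le).2]
    linarith [log_one_sub_add_log_ginv_binEntropy_add_one_neg hinv h0 h1]
  refine div_neg_of_neg_of_pos ?_ (by positivity)
  rw [mul_one, sub_neg, mul_assoc, inv_mul_lt_iff₀ hc]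
  linarith

lemma mul_ginv_binEntropy_lt {η α : ℝ} (hη0 : 0 < η) (hη1 : η < 1) (hα0 : 0 < α) (hα1 : α ≤ 1) :
    η * ginv (binEntropy α) < ginv (binEntropy (η * α)) := by
  rcases hα1.eq_or_lt with rfl | hα1
  · simpa [ginv_zero hinv] using ginv_pos hinv (binEntropy_pos hη0 hη1)
  have hηα : 0 < η * α := by positivity
  have h := strictAntiOn_ginv_binEntropy_div hinv ⟨hηα, by nlinarith⟩ ⟨hα0, hα1⟩
    (by nlinarith : η * α < α)
  rw [div_lt_div_iff₀ hα0 hηα] at h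
  nlinarith

end

theorem epni_two_point (ginv : ℝ → ℝ)
    (hinv : ∀ x ∈ Set.Ici (0:ℝ), 0 ≤ ginv x ∧ g (ginv x) = x) :
    ∀ η ∈ Set.Icc (0:ℝ) 1, ∀ α ∈ Set.Icc (0:ℝ) 1,
      η * ginv (Hb α) ≤ ginv (Hb (η * α)) ∧
      (ginv (Hb (η * α)) = η * ginv (Hb α) ↔ (η = 0 ∨ η = 1) ∨ α = 0) := by
  rintro η ⟨hη0, hη1⟩ α ⟨hα0, hα1⟩
  rw [Hb_eq_binEntropy]
  by_cases hdeg : (η = 0 ∨ η = 1) ∨ α = 0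
  · have heq : ginv (binEntropy (η * α)) = η * ginv (binEntropy α) := by
      rcases hdeg with (rfl | rfl) | rfl <;> simp [ginv_zero hinv]
    exact ⟨heq.ge, iff_of_true heq hdeg⟩
  · simp only [not_or] at hdeg
    have hlt := mul_ginv_binEntropy_lt hinv (hη0.lt_of_ne' hdeg.1.1) (hη1.lt_of_ne hdeg.1.2)
      (hα0.lt_of_ne' hdeg.2) hα1
    exact ⟨hlt.le, iff_of_false hlt.ne' (by tauto)⟩
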